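/- arXiv:1805.09260 — 2 statements merged into one kernel-verified Lean document; each statement's English description precedes it below -/
import Mathlib

section
/- Let m > 0, m_s > 0, a > 0 and let f be the Fisher–Snedecor F density f(t) = a^m t^{m-1} / (B(m, m_s) (1 + a t)^{m + m_s}) on (0, ∞). Then for every x ≥ 0, writing z = a x / (1 + a x) ∈ [0, 1), the CDF F(x) = ∫_0^x f(t) dt satisfies F(x) = z^m · ₂F₁(m, 1 − m_s; m + 1; z) / (m · B(m, m_s)), where ₂F₁ denotes the Gauss ordinary hypergeometric function (given by its power series, which converges since 0 ≤ z < 1). -/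
open MeasureTheory Real Set

/-- The real Beta function `B(p, q) = Γ(p) Γ(q) / Γ(p + q)`. -/
noncomputable def betaR (p q : ℝ) : ℝ := Real.Gamma p * Real.Gamma q / Real.Gamma (p + q)

/-- The Fisher–Snedecor F density. -/
noncomputable def fsDens (m ms a x : ℝ) : ℝ :=
  if 0 < x then a ^ m * x ^ (m - 1) / (betaR m ms * (1 + a * x) ^ (m + ms)) else 0

/-- The Gauss hypergeometric function `₂F₁(α, β; γ; z)`, defined by its power series
`∑_{n ≥ 0} ((α)_n (β)_n / (γ)_n) zⁿ / n!`, where `(·)_n` is the ascending Pochhammer symbol. -/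
noncomputable def gauss2F1 (α β γ z : ℝ) : ℝ :=
  ∑' n : ℕ,
    (Polynomial.eval α (ascPochhammer ℝ n) * Polynomial.eval β (ascPochhammer ℝ n) /
        Polynomial.eval γ (ascPochhammer ℝ n)) * z ^ n / (n.factorial : ℝ)

/-! The substitution `u = a t / (1 + a t)` turns the CDF into the incomplete beta integral
`∫₀ᶻ u^(m-1) (1-u)^(ms-1) du / B(m, ms)`. Expanding `(1-u)^(ms-1) = ∑ (1-ms)ₙ/n! uⁿ` (binomial
series) and integrating term by term, which dominated convergence allows because the series
converges absolutely on `[0, z]` for `z < 1`, gives `∑ (1-ms)ₙ/n! z^(m+n)/(m+n)`; since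
`(m)ₙ/(m+1)ₙ = m/(m+n)`, this is `zᵐ ₂F₁(m, 1-ms; m+1; z) / m`. -/

lemma ascPochhammer_eval_mul_add_natCast (x : ℝ) (n : ℕ) :
    (ascPochhammer ℝ n).eval x * (x + n) = x * (ascPochhammer ℝ n).eval (x + 1) := by
  rw [← ascPochhammer_succ_eval, ascPochhammer_succ_left]
  simp

lemma multichoose_eq_eval_ascPochhammer_div (β : ℝ) (n : ℕ) :
    Ring.multichoose β n = (ascPochhammer ℝ n).eval β / n.factorial := by
  rw [eq_div_iff (by positivity), ← Polynomial.ascPochhammer_smeval_eq_eval,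
    ← Ring.factorial_nsmul_multichoose_eq_ascPochhammer, nsmul_eq_mul, mul_comm]

lemma one_sub_rpow_neg_hasFPowerSeriesOnBall_zero (β : ℝ) :
    HasFPowerSeriesOnBall (fun u ↦ (1 - u) ^ (-β)) (.ofScalars ℝ (Ring.multichoose β)) 0 1 := by
  have h := Real.one_div_one_sub_rpow_hasFPowerSeriesOnBall_zero β
  simp_rw [← Ring.multichoose_eq] at h
  refine h.congr fun u hu ↦ ?_
  have hu : |u| < 1 := by simpa [Real.enorm_eq_ofReal_abs] using hu
  have : 0 ≤ 1 - u := by linarith [le_abs_self u]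
  simp [Real.rpow_neg this]

lemma hasSum_multichoose_mul_pow (β : ℝ) {u : ℝ} (hu : |u| < 1) :
    HasSum (fun n ↦ Ring.multichoose β n * u ^ n) ((1 - u) ^ (-β)) := by
  have := (one_sub_rpow_neg_hasFPowerSeriesOnBall_zero β).hasSum (y := u)
    (by simpa [Real.enorm_eq_ofReal_abs] using hu)
  simpa [FormalMultilinearSeries.ofScalars_apply_eq, mul_comm] using this

lemma summable_abs_multichoose_mul_pow (β : ℝ) {r : ℝ} (hr0 : 0 ≤ r) (hr1 : r < 1) :
    Summable (fun n ↦ |Ring.multichoose β n| * r ^ n) := by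
  lift r to NNReal using hr0
  have h := FormalMultilinearSeries.summable_norm_mul_pow _
    ((ENNReal.coe_lt_one_iff.2 hr1).trans_le (one_sub_rpow_neg_hasFPowerSeriesOnBall_zero β).r_le)
  simpa [FormalMultilinearSeries.ofScalars_norm] using h

noncomputable def incBeta (p q z : ℝ) : ℝ :=
  ∫ u in (0 : ℝ)..z, u ^ (p - 1) * (1 - u) ^ (q - 1)

lemma integral_rpow_sub_one_mul_pow {p : ℝ} (hp : 0 < p) (z : ℝ) (n : ℕ) :
    ∫ u in (0 : ℝ)..z, u ^ (p - 1) * u ^ n = z ^ (p + n) / (p + n) := by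
  have hpn : 0 < p + n := by positivity
  calc ∫ u in (0 : ℝ)..z, u ^ (p - 1) * u ^ n = ∫ u in (0 : ℝ)..z, u ^ (p - 1 + n) :=
        intervalIntegral.integral_congr_ae <| (Measure.ae_ne volume 0).mono
          fun u hu _ ↦ (Real.rpow_add_natCast hu _ _).symm
    _ = z ^ (p + n) / (p + n) := by
        rw [integral_rpow (Or.inl (by linarith)), show p - 1 + n + 1 = p + n by ring,
          Real.zero_rpow hpn.ne', sub_zero]

lemma hasSum_incBeta {p : ℝ} (hp : 0 < p) (q : ℝ) {z : ℝ} (hz0 : 0 ≤ z) (hz1 : z < 1) :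
    HasSum (fun n : ℕ ↦ Ring.multichoose (1 - q) n * (z ^ (p + n) / (p + n)))
      (incBeta p q z) := by
  set c := Ring.multichoose (1 - q)
  have hterm (n : ℕ) : ∫ u in (0 : ℝ)..z, u ^ (p - 1) * (c n * u ^ n) =
      c n * (z ^ (p + n) / (p + n)) := by
    simp_rw [mul_left_comm _ (c n)]
    rw [intervalIntegral.integral_const_mul, integral_rpow_sub_one_mul_pow hp]
  simp_rw [← hterm]
  refine intervalIntegral.hasSum_integral_of_dominated_convergence
    (fun n u ↦ u ^ (p - 1) * (|c n| * z ^ n)) (fun n ↦ ?_) (fun n ↦ ?_) ?_ ?_ ?_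
  · exact (by fun_prop : Measurable fun u : ℝ ↦ u ^ (p - 1) * (c n * u ^ n)).aestronglyMeasurable
  · refine Filter.Eventually.of_forall fun u hu ↦ ?_
    rw [uIoc_of_le hz0] at hu
    rw [norm_mul, norm_mul, norm_pow, Real.norm_eq_abs, Real.norm_eq_abs, Real.norm_eq_abs,
      abs_of_pos (Real.rpow_pos_of_pos hu.1 _), abs_of_pos hu.1]
    exact mul_le_mul_of_nonneg_left (mul_le_mul_of_nonneg_left (pow_le_pow_left₀ hu.1.le hu.2 n)
      (abs_nonneg _)) (Real.rpow_nonneg hu.1.le _)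
  · exact Filter.Eventually.of_forall fun u _ ↦
      (summable_abs_multichoose_mul_pow (1 - q) hz0 hz1).mul_left _
  · simp_rw [tsum_mul_left]
    exact (intervalIntegral.intervalIntegrable_rpow' (by linarith)).mul_const _
  · refine Filter.Eventually.of_forall fun u hu ↦ ?_
    rw [uIoc_of_le hz0] at hu
    have h := hasSum_multichoose_mul_pow (1 - q) (u := u)
      (abs_lt.2 ⟨by linarith [hu.1], by linarith [hu.2]⟩)
    rw [neg_sub] at h
    exact h.mul_left _

lemma incBeta_eq_gauss2F1 {p : ℝ} (hp : 0 < p) (q : ℝ) {z : ℝ} (hz0 : 0 ≤ z) (hz1 : z < 1) :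
    incBeta p q z = z ^ p * gauss2F1 p (1 - q) (p + 1) z / p := by
  rw [← (hasSum_incBeta hp q hz0 hz1).tsum_eq, gauss2F1, ← tsum_mul_left, ← tsum_div_const]
  refine tsum_congr fun n ↦ ?_
  have hpn : 0 < p + n := by positivity
  have hpoch := ascPochhammer_eval_mul_add_natCast p n
  have hpos := ascPochhammer_pos n (p + 1) (by linarith)
  rw [multichoose_eq_eval_ascPochhammer_div, Real.rpow_add_natCast' hz0 hpn.ne']
  field_simp
  linear_combination -((ascPochhammer ℝ n).eval (1 - q) * z ^ p * z ^ n) * hpoch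

lemma hasDerivAt_mul_div_one_add_mul (a : ℝ) {t : ℝ} (ht : 1 + a * t ≠ 0) :
    HasDerivAt (fun t ↦ a * t / (1 + a * t)) (a / (1 + a * t) ^ 2) t := by
  have h := ((hasDerivAt_id t).const_mul a).div (((hasDerivAt_id t).const_mul a).const_add 1) ht
  simp only [id, mul_one] at h
  exact h.congr_deriv (by field_simp; ring)

lemma fsDens_eq_incBeta_integrand_comp_mul_deriv (m ms : ℝ) {a t : ℝ} (ha : 0 < a)
    (ht : 0 < t) :
    fsDens m ms a t = (a * t / (1 + a * t)) ^ (m - 1) * (1 - a * t / (1 + a * t)) ^ (ms - 1) *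
      (a / (1 + a * t) ^ 2) / betaR m ms := by
  set s := 1 + a * t
  have hs0 : 0 < s := by positivity
  have h1 : 1 - a * t / s = s⁻¹ := by field_simp; ring
  have ham : a ^ m = a ^ (m - 1) * a := by rw [Real.rpow_sub_one ha.ne', div_mul_cancel₀ _ ha.ne']
  have hsm : s ^ (m + ms) = s ^ (m - 1) * s ^ (ms - 1) * s ^ 2 := by
    rw [← Real.rpow_add hs0, ← Real.rpow_natCast, ← Real.rpow_add hs0]; push_cast; ring_nf
  rw [fsDens, if_pos ht, h1, Real.div_rpow (by positivity) hs0.le, Real.mul_rpow ha.le ht.le,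
    Real.inv_rpow hs0.le, ham, hsm]
  field_simp

lemma integral_fsDens_eq_incBeta_div_betaR (m ms : ℝ) {a : ℝ} (ha : 0 < a) {x : ℝ}
    (hx : 0 ≤ x) :
    ∫ t in (0 : ℝ)..x, fsDens m ms a t = incBeta m ms (a * x / (1 + a * x)) / betaR m ms := by
  have hf : ∀ t ∈ Icc 0 x, HasDerivAt (fun t ↦ a * t / (1 + a * t)) (a / (1 + a * t) ^ 2) t :=
    fun t ht ↦ hasDerivAt_mul_div_one_add_mul a (by have := ht.1; positivity)
  have hsubst := intervalIntegral.integral_comp_mul_deriv_of_deriv_nonneg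
    (g := fun u ↦ u ^ (m - 1) * (1 - u) ^ (ms - 1))
    (fun t ht ↦ (hf t (by rwa [uIcc_of_le hx] at ht)).continuousAt.continuousWithinAt)
    (fun t ht ↦ hf t (by
      rw [min_eq_left hx, max_eq_right hx] at ht; exact Ioo_subset_Icc_self ht))
    (fun t _ ↦ by positivity)
  simp only [mul_zero, zero_div] at hsubst
  rw [incBeta, ← hsubst, ← intervalIntegral.integral_div]
  refine intervalIntegral.integral_congr_ae (Filter.Eventually.of_forall fun t ht ↦ ?_)
  rw [uIoc_of_le hx] at ht
  exact fsDens_eq_incBeta_integrand_comp_mul_deriv m ms ha ht.1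

theorem fsDens_cdf_eq_hypergeometric_general (m ms a : ℝ) (hm : 0 < m)
    (ha : 0 < a) (x : ℝ) (hx : 0 ≤ x) :
    ∫ t in (0 : ℝ)..x, fsDens m ms a t =
      (a * x / (1 + a * x)) ^ m *
        gauss2F1 m (1 - ms) (m + 1) (a * x / (1 + a * x)) / (m * betaR m ms) := by
  have hz1 : a * x / (1 + a * x) < 1 := (div_lt_one (by positivity)).2 (by linarith)
  rw [integral_fsDens_eq_incBeta_div_betaR m ms ha hx,
    incBeta_eq_gauss2F1 hm ms (by positivity) hz1, div_div]

/-- The CDF of the Fisher–Snedecor F distribution in terms of the Gauss hypergeometric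
function: `F(x) = zᵐ ₂F₁(m, 1 - ms; m + 1; z) / (m B(m, ms))` with `z = a x / (1 + a x)`. -/
theorem fsDens_cdf_eq_hypergeometric (m ms a : ℝ) (hm : 0 < m) (hms : 0 < ms)
    (ha : 0 < a) (x : ℝ) (hx : 0 ≤ x) :
    ∫ t in (0 : ℝ)..x, fsDens m ms a t =
      (a * x / (1 + a * x)) ^ m *
        gauss2F1 m (1 - ms) (m + 1) (a * x / (1 + a * x)) / (m * betaR m ms) :=
  fsDens_cdf_eq_hypergeometric_general m ms a hm ha x hx
end

section
/- Let m > 0, m_s > 0, a > 0 and let F(x) = ∫_0^x f(t) dt be the CDF of the Fisher–Snedecor F density f(t) = a^m t^{m-1} / (B(m, m_s) (1 + a t)^{m + m_s}). Then as x → 0⁺, F(x) = (a^m Γ(m + m_s) / (Γ(m + 1) Γ(m_s))) x^m + O(x^{m+1}); that is, x ↦ F(x) − (a^m Γ(m+m_s)/(Γ(m+1)Γ(m_s))) x^m is O(x^{m+1}) as x tends to 0 from the right. -/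
open MeasureTheory Real Set Asymptotics Filter

/-!
For `t > 0` the density factors as `t^(m-1) · h(t)` with
`h(t) = aᵐ / B(m, ms) · (1 + a t)^(-(m+ms))` differentiable at `0`, so `h(t) = h(0) + O(t)`.
The term `t^(m-1) h(0)` integrates to the leading term `h(0) xᵐ / m`, and the remainder
`O(t^m)` integrates to `O(x^(m+1))`.
-/

open scoped Topology

theorem norm_integral_rpow_sub_one_mul_le {m L x : ℝ} (hm : -1 < m) (hx : 0 ≤ x)
    {g : ℝ → ℝ} (hg : ∀ t ∈ Ioc 0 x, ‖g t‖ ≤ L * t) :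
    ‖∫ t in (0 : ℝ)..x, t ^ (m - 1) * g t‖ ≤ L / (m + 1) * x ^ (m + 1) := by
  have hpointwise : ∀ t ∈ Ioc 0 x, ‖t ^ (m - 1) * g t‖ ≤ L * t ^ m := fun t ht => by
    have htm : t ^ m = t ^ (m - 1) * t := by
      rw [← rpow_add_one ht.1.ne', sub_add_cancel]
    rw [norm_mul, norm_of_nonneg (rpow_nonneg ht.1.le _), htm]
    nlinarith [hg t ht, rpow_nonneg ht.1.le (m - 1)]
  calc ‖∫ t in (0 : ℝ)..x, t ^ (m - 1) * g t‖
      ≤ ∫ t in (0 : ℝ)..x, L * t ^ m :=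
        intervalIntegral.norm_integral_le_of_norm_le hx (ae_of_all _ hpointwise)
          ((intervalIntegral.intervalIntegrable_rpow' hm).const_mul L)
    _ = L / (m + 1) * x ^ (m + 1) := by
        rw [intervalIntegral.integral_const_mul, integral_rpow (Or.inl hm),
          zero_rpow (by linarith : m + 1 ≠ 0)]
        ring

theorem integral_rpow_sub_one_mul_sub_isBigO {m : ℝ} (hm : 0 < m) {h : ℝ → ℝ}
    (hcont : ∀ᶠ t in 𝓝 0, ContinuousAt h t)
    (hbigO : (fun t => h t - h 0) =O[𝓝 0] fun t => t) :
    (fun x => (∫ t in (0 : ℝ)..x, t ^ (m - 1) * h t) - h 0 / m * x ^ m)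
      =O[𝓝[>] 0] fun x => x ^ (m + 1) := by
  obtain ⟨L, hL⟩ := hbigO.bound
  obtain ⟨ε, hε, hnear⟩ := Metric.eventually_nhds_iff.1 (hcont.and hL)
  refine IsBigO.of_bound (L / (m + 1)) ?_
  filter_upwards [Ioo_mem_nhdsGT hε] with x ⟨hx0, hxε⟩
  have hsmall : ∀ t ∈ Icc 0 x, ContinuousAt h t ∧ ‖h t - h 0‖ ≤ L * t := fun t ht => by
    have := hnear (y := t) (by rw [Real.dist_eq, sub_zero, abs_of_nonneg ht.1]; linarith [ht.2])
    rwa [Real.norm_of_nonneg ht.1] at this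
  have hrpow : IntervalIntegrable (fun t : ℝ => t ^ (m - 1)) volume 0 x :=
    intervalIntegral.intervalIntegrable_rpow' (by linarith)
  have hint : IntervalIntegrable (fun t => t ^ (m - 1) * h t) volume 0 x :=
    hrpow.mul_continuousOn fun t ht =>
      (hsmall t (by rwa [uIcc_of_le hx0.le] at ht)).1.continuousWithinAt
  have hleading : ∫ t in (0 : ℝ)..x, t ^ (m - 1) * h 0 = h 0 / m * x ^ m := by
    rw [intervalIntegral.integral_mul_const, integral_rpow (Or.inl (by linarith)), sub_add_cancel,
      zero_rpow hm.ne']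
    ring
  have hsplit : (∫ t in (0 : ℝ)..x, t ^ (m - 1) * h t) - h 0 / m * x ^ m
      = ∫ t in (0 : ℝ)..x, t ^ (m - 1) * (h t - h 0) := by
    simp_rw [← hleading, ← intervalIntegral.integral_sub hint (hrpow.mul_const _), mul_sub]
  rw [hsplit, Real.norm_of_nonneg (rpow_pos_of_pos hx0 _).le]
  exact norm_integral_rpow_sub_one_mul_le (by linarith) hx0.le fun t ht =>
    (hsmall t (Ioc_subset_Icc_self ht)).2

noncomputable def fsSmoothFactor (m ms a t : ℝ) : ℝ :=
  a ^ m / betaR m ms * ((1 + a * t) ^ (m + ms))⁻¹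

theorem fsDens_eq_rpow_mul_fsSmoothFactor {m ms a t : ℝ} (ht : 0 < t) :
    fsDens m ms a t = t ^ (m - 1) * fsSmoothFactor m ms a t := by
  rw [fsDens, if_pos ht, fsSmoothFactor]
  ring

theorem fsSmoothFactor_zero_div {m : ℝ} (hm : 0 < m) (ms a : ℝ) :
    fsSmoothFactor m ms a 0 / m
      = a ^ m * Real.Gamma (m + ms) / (Real.Gamma (m + 1) * Real.Gamma ms) := by
  simp only [fsSmoothFactor, betaR, div_div_eq_mul_div, Real.Gamma_add_one hm.ne', mul_zero,
    add_zero, one_rpow, inv_one]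
  ring

theorem eventually_differentiableAt_fsSmoothFactor (m ms a : ℝ) :
    ∀ᶠ t in 𝓝 (0 : ℝ), DifferentiableAt ℝ (fsSmoothFactor m ms a) t := by
  have hbase : ∀ᶠ t in 𝓝 (0 : ℝ), 0 < 1 + a * t :=
    (continuous_const.add (continuous_const.mul continuous_id)).continuousAt.eventually
      (lt_mem_nhds (by simp))
  filter_upwards [hbase] with t ht
  unfold fsSmoothFactor
  fun_prop (disch := positivity)

theorem fsCdf_asymptotic_origin_general (m ms a : ℝ) (hm : 0 < m) :
    (fun x : ℝ => (∫ t in (0 : ℝ)..x, fsDens m ms a t) -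
        (a ^ m * Real.Gamma (m + ms) / (Real.Gamma (m + 1) * Real.Gamma ms)) * x ^ m)
      =O[nhdsWithin 0 (Set.Ioi 0)] fun x : ℝ => x ^ (m + 1) := by
  have hdiff := eventually_differentiableAt_fsSmoothFactor m ms a
  have hbigO :
      (fun t => fsSmoothFactor m ms a t - fsSmoothFactor m ms a 0) =O[𝓝 0] fun t => t := by
    simpa only [sub_zero] using hdiff.self_of_nhds.hasDerivAt.isBigO_sub
  refine (integral_rpow_sub_one_mul_sub_isBigO hm (hdiff.mono fun t ht => ht.continuousAt)
    hbigO).congr' ?_ EventuallyEq.rfl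
  filter_upwards [self_mem_nhdsWithin] with x hx
  rw [fsSmoothFactor_zero_div hm, intervalIntegral.integral_of_le (le_of_lt hx),
    intervalIntegral.integral_of_le (le_of_lt hx)]
  congr 1
  exact setIntegral_congr_fun measurableSet_Ioc fun t ht =>
    (fsDens_eq_rpow_mul_fsSmoothFactor ht.1).symm

/-- As `x → 0⁺`, the CDF of the Fisher–Snedecor F distribution satisfies
`F(x) = (aᵐ Γ(m + ms) / (Γ(m + 1) Γ(ms))) xᵐ + O(x^(m+1))`. -/
theorem fsCdf_asymptotic_origin (m ms a : ℝ) (hm : 0 < m) (hms : 0 < ms) (ha : 0 < a) :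
    (fun x : ℝ => (∫ t in (0 : ℝ)..x, fsDens m ms a t) -
        (a ^ m * Real.Gamma (m + ms) / (Real.Gamma (m + 1) * Real.Gamma ms)) * x ^ m)
      =O[nhdsWithin 0 (Set.Ioi 0)] fun x : ℝ => x ^ (m + 1) :=
  fsCdf_asymptotic_origin_general m ms a hm
end
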